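/- Let E, F be Banach lattices and assume the lattice operations in E′ are sequentially w*-continuous: for every w*-null sequence (g_n) in E′ and every x ≥ 0 in E one has sup{ g_n(w) : |w| ≤ x } → 0 (the moduli |g_n| are w*-null). Then every M-weakly compact operator T : E → F is limited: ‖T′ f_n‖ → 0 for every w*-null sequence (f_n) in F′. -/

import Mathlib

/-!
M-weak compactness of `T` yields, for every `δ > 0`, one `u ≥ 0` with `‖T (v - u)⁺‖ ≤ δ` for all
`0 ≤ v` in the unit ball. Otherwise a greedy choice of `vₙ` in the unit ball, together with the
majorant `u = ∑ 2⁻ⁿ vₙ`, makes `(vₙ - 4ⁿ ∑_{k<n} v_k - 2⁻ⁿ u)⁺` a bounded disjoint sequence on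
which `T` stays large.

Splitting `v = v ⊓ u + (v - u)⁺` then gives `‖T′ fₙ‖ ≤ 2 (|T′ fₙ|(u) + ‖fₙ‖ δ)`. The first term
tends to zero by the sequential w*-continuity of the lattice operations of `E′`, and the second is
uniformly small because `(fₙ)` is bounded by the uniform boundedness principle.
-/

open Filter Topology Finset

theorem exists_seq_forall_partialSum {M : Type*} [AddCommMonoid M] {P : ℕ → M → M → Prop}
    (h : ∀ n s, ∃ v, P n s v) : ∃ x : ℕ → M, ∀ n, P n (∑ k ∈ range n, x k) (x n) := by
  choose g hg using h
  let S : ℕ → M := fun n => Nat.rec 0 (fun k s => s + g k s) n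
  have hS : ∀ n, S n = ∑ k ∈ range n, g k (S k) := by
    intro n
    induction n with
    | zero => rfl
    | succ n ih => rw [sum_range_succ, ← ih]
  exact ⟨fun n => g n (S n), fun n => hS n ▸ hg n (S n)⟩

theorem nonneg_of_two_pow_nsmul_nonneg {α : Type*} [Lattice α] [AddCommGroup α]
    [IsOrderedAddMonoid α] {a : α} : ∀ k : ℕ, 0 ≤ 2 ^ k • a → 0 ≤ a
  | 0, h => by simpa using h
  | k + 1, h => nsmul_two_semiclosed <|
      nonneg_of_two_pow_nsmul_nonneg k (by rwa [← mul_nsmul, ← pow_succ'])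

-- Scalars `⌊r 2ᵏ⌋₊ / 2ᵏ` preserve positivity by the lemma above, and the positive cone is closed.
instance HasSolidNorm.posSMulMono {E : Type*} [NormedAddCommGroup E] [Lattice E]
    [HasSolidNorm E] [IsOrderedAddMonoid E] [NormedSpace ℝ E] : PosSMulMono ℝ E := by
  refine PosSMulMono.of_smul_nonneg fun r hr x hx => ?_
  have hq : Tendsto (fun k : ℕ => (⌊r * 2 ^ k⌋₊ : ℝ) / 2 ^ k) atTop (𝓝 r) :=
    (tendsto_nat_floor_mul_div_atTop hr).comp
      (tendsto_pow_atTop_atTop_of_one_lt one_lt_two)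
  refine ge_of_tendsto' (hq.smul_const x) fun k => nonneg_of_two_pow_nsmul_nonneg k ?_
  rw [← Nat.cast_smul_eq_nsmul ℝ, smul_smul, Nat.cast_pow, Nat.cast_ofNat,
    mul_div_cancel₀ _ (by positivity), Nat.cast_smul_eq_nsmul]
  exact nsmul_nonneg hx _

section LatticeModule

variable {E : Type*} [Lattice E] [AddCommGroup E] [Module ℝ E] [PosSMulMono ℝ E]

theorem smul_posPart_of_nonneg {t : ℝ} (ht : 0 ≤ t) (a : E) : t • a⁺ = (t • a)⁺ := by
  rcases ht.eq_or_lt with rfl | ht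
  · simp
  · have h := (OrderIso.smulRight (β := E) ht).map_sup a 0
    rwa [OrderIso.smulRight_apply, OrderIso.smulRight_apply, OrderIso.smulRight_apply,
      smul_zero] at h

variable [IsOrderedAddMonoid E]

theorem posPart_sub_smul_inf_posPart_sub_smul_eq_zero {a b : E} (ha : 0 ≤ a) {t N : ℝ}
    (ht : 0 < t) (ht1 : t ≤ 1) (hNt : 1 ≤ N * t) : (a - t • b)⁺ ⊓ (b - N • a)⁺ = 0 := by
  set d := (a - t • b)⁺ ⊓ (b - N • a)⁺
  have hd : 0 ≤ d := le_inf (posPart_nonneg _) (posPart_nonneg _)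
  have hpos : t • d ≤ (a - t • b)⁺ := (smul_le_of_le_one_left hd ht1).trans inf_le_left
  have hneg : t • d ≤ (a - t • b)⁻ :=
    calc t • d ≤ t • (b - N • a)⁺ := smul_le_smul_of_nonneg_left inf_le_right ht.le
      _ = (t • b - (N * t) • a)⁺ := by
        rw [smul_posPart_of_nonneg ht.le, smul_sub, smul_smul, mul_comm]
      _ ≤ (t • b - a)⁺ := posPart_mono (sub_le_sub_left (le_smul_of_one_le_left ha hNt) _)
      _ = (a - t • b)⁻ := by rw [← neg_sub, posPart_neg]
  refine le_antisymm ?_ hd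
  refine nonpos_of_smul_nonpos_of_pos_left ?_ ht
  rw [← posPart_inf_negPart_eq_zero (a - t • b)]
  exact le_inf hpos hneg

theorem posPart_sub_partialSum_inf_eq_zero {x : ℕ → E} (hx : ∀ n, 0 ≤ x n) {u : E}
    (hu : ∀ n, (2⁻¹ : ℝ) ^ n • x n ≤ u) {n m : ℕ} (hnm : n < m) :
    (x n - (4 : ℝ) ^ n • ∑ k ∈ range n, x k - (2⁻¹ : ℝ) ^ n • u)⁺ ⊓
      (x m - (4 : ℝ) ^ m • ∑ k ∈ range m, x k - (2⁻¹ : ℝ) ^ m • u)⁺ = 0 := by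
  set t : ℝ := 2⁻¹ ^ n * 2⁻¹ ^ m
  have hu0 : 0 ≤ u := (smul_nonneg (by positivity) (hx 0)).trans (hu 0)
  have hsum : ∀ l, 0 ≤ ∑ k ∈ range l, x k := fun l => sum_nonneg fun k _ => hx k
  have hn : x n - (4 : ℝ) ^ n • ∑ k ∈ range n, x k - (2⁻¹ : ℝ) ^ n • u ≤ x n - t • x m :=
    calc _ ≤ x n - (2⁻¹ : ℝ) ^ n • u :=
          sub_le_sub_right (sub_le_self _ (smul_nonneg (by positivity) (hsum n))) _
      _ ≤ x n - t • x m := by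
          rw [mul_smul]
          exact sub_le_sub_left (smul_le_smul_of_nonneg_left (hu m) (by positivity)) _
  have hm : x m - (4 : ℝ) ^ m • ∑ k ∈ range m, x k - (2⁻¹ : ℝ) ^ m • u ≤
      x m - (4 : ℝ) ^ m • x n :=
    calc _ ≤ x m - (4 : ℝ) ^ m • ∑ k ∈ range m, x k :=
          sub_le_self _ (smul_nonneg (by positivity) hu0)
      _ ≤ x m - (4 : ℝ) ^ m • x n :=
          sub_le_sub_left (smul_le_smul_of_nonneg_left
            (single_le_sum (fun k _ => hx k) (mem_range.2 hnm)) (by positivity)) _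
  have ht1 : t ≤ 1 := mul_le_one₀ (pow_le_one₀ (by norm_num) (by norm_num)) (by positivity)
    (pow_le_one₀ (by norm_num) (by norm_num))
  have hNt : 1 ≤ (4 : ℝ) ^ m * t := by
    have : (2 : ℝ) ^ n ≤ 2 ^ m := pow_le_pow_right₀ one_le_two hnm.le
    rw [show (4 : ℝ) = 2 * 2 by norm_num, mul_pow]
    simp only [t, inv_pow]
    field_simp
    exact this
  refine le_antisymm ?_ (le_inf (posPart_nonneg _) (posPart_nonneg _))
  calc _ ≤ (x n - t • x m)⁺ ⊓ (x m - (4 : ℝ) ^ m • x n)⁺ :=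
        inf_le_inf (posPart_mono hn) (posPart_mono hm)
    _ = 0 := posPart_sub_smul_inf_posPart_sub_smul_eq_zero (hx n) (by positivity) ht1 hNt

end LatticeModule

section SolidNorm

variable {E : Type*} [NormedAddCommGroup E] [Lattice E] [HasSolidNorm E] [IsOrderedAddMonoid E]

theorem norm_le_norm_of_nonneg_of_le {a b : E} (ha : 0 ≤ a) (hab : a ≤ b) : ‖a‖ ≤ ‖b‖ :=
  norm_le_norm_of_abs_le_abs <| by rwa [abs_of_nonneg ha, abs_of_nonneg (ha.trans hab)]

theorem norm_posPart_le (a : E) : ‖a⁺‖ ≤ ‖a‖ :=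
  norm_le_norm_of_abs_le_abs <| by
    rw [abs_of_nonneg (posPart_nonneg a)]
    exact sup_le (le_abs_self a) (abs_nonneg a)

theorem norm_negPart_le (a : E) : ‖a⁻‖ ≤ ‖a‖ := by
  simpa [posPart_neg] using norm_posPart_le (-a)

variable {F : Type*} [NormedAddCommGroup F] [NormedSpace ℝ E] [NormedSpace ℝ F]

theorem ContinuousLinearMap.norm_map_posPart_le (T : E →L[ℝ] F) (c w : E) :
    ‖T c⁺‖ ≤ ‖T (c - w)⁺‖ + ‖T‖ * ‖w‖ :=
  calc ‖T c⁺‖ ≤ ‖T (c - w)⁺‖ + ‖T (c⁺ - (c - w)⁺)‖ := by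
        simpa using norm_add_le (T (c - w)⁺) (T (c⁺ - (c - w)⁺))
    _ ≤ ‖T (c - w)⁺‖ + ‖T‖ * ‖w‖ := by
        gcongr
        refine (T.le_opNorm _).trans (mul_le_mul_of_nonneg_left ?_ (norm_nonneg T))
        have h := norm_sup_sub_sup_le_norm c (c - w) 0
        rwa [sub_sub_cancel] at h

theorem exists_geometric_smul_le [CompleteSpace E] {x : ℕ → E} (hx0 : ∀ n, 0 ≤ x n)
    (hx1 : ∀ n, ‖x n‖ ≤ 1) : ∃ u : E, ∀ n, (2⁻¹ : ℝ) ^ n • x n ≤ u := by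
  have hsum : Summable fun n => (2⁻¹ : ℝ) ^ n • x n := by
    refine Summable.of_norm_bounded summable_geometric_two fun n => ?_
    rw [norm_smul, norm_pow, norm_inv, Real.norm_two, one_div]
    exact mul_le_of_le_one_right (by positivity) (hx1 n)
  exact ⟨_, fun n => hsum.le_tsum n fun k _ => smul_nonneg (by positivity) (hx0 k)⟩

end SolidNorm

section MWeaklyCompact

variable {E F : Type*} [NormedAddCommGroup E] [Lattice E] [NormedSpace ℝ E]
  [NormedAddCommGroup F] [NormedSpace ℝ F]

def IsMWeaklyCompact (T : E →L[ℝ] F) : Prop :=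
  ∀ x : ℕ → E, (∀ n m, n ≠ m → |x n| ⊓ |x m| = 0) → (∃ C : ℝ, ∀ n, ‖x n‖ ≤ C) →
    Tendsto (fun n => ‖T (x n)‖) atTop (𝓝 0)

variable [HasSolidNorm E] [IsOrderedAddMonoid E]

theorem IsMWeaklyCompact.exists_norm_map_posPart_sub_le [CompleteSpace E] {T : E →L[ℝ] F}
    (hT : IsMWeaklyCompact T) {ε : ℝ} (hε : 0 < ε) :
    ∃ u : E, 0 ≤ u ∧ ∀ v : E, 0 ≤ v → ‖v‖ ≤ 1 → ‖T (v - u)⁺‖ ≤ ε := by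
  by_contra! H
  obtain ⟨x, hx⟩ := exists_seq_forall_partialSum
    (P := fun n s v => 0 ≤ v ∧ ‖v‖ ≤ 1 ∧ ε < ‖T (v - ((4 : ℝ) ^ n • s)⁺)⁺‖)
    fun n s => H _ (posPart_nonneg _)
  have hx0 : ∀ n, 0 ≤ x n := fun n => (hx n).1
  obtain ⟨u, hu⟩ := exists_geometric_smul_le hx0 fun n => (hx n).2.1
  set y : ℕ → E := fun n => (x n - (4 : ℝ) ^ n • ∑ k ∈ range n, x k - (2⁻¹ : ℝ) ^ n • u)⁺
  have hy_disj : ∀ n m, n ≠ m → |y n| ⊓ |y m| = 0 := by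
    intro n m hnm
    simp only [y, abs_of_nonneg (posPart_nonneg _)]
    rcases hnm.lt_or_gt with h | h
    · exact posPart_sub_partialSum_inf_eq_zero hx0 hu h
    · rw [inf_comm]
      exact posPart_sub_partialSum_inf_eq_zero hx0 hu h
  have hy_norm : ∀ n, ‖y n‖ ≤ 1 := by
    intro n
    refine (norm_le_norm_of_nonneg_of_le (posPart_nonneg _) ?_).trans (hx n).2.1
    refine sup_le ((sub_le_self _ ?_).trans (sub_le_self _ ?_)) (hx0 n)
    · exact smul_nonneg (by positivity) ((smul_nonneg (by positivity) (hx0 0)).trans (hu 0))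
    · exact smul_nonneg (by positivity) (sum_nonneg fun k _ => hx0 k)
  have hlower : ∀ n, ε < ‖T (y n)‖ + ‖T‖ * ((2⁻¹ : ℝ) ^ n * ‖u‖) := by
    intro n
    have hS : ((4 : ℝ) ^ n • ∑ k ∈ range n, x k)⁺ = (4 : ℝ) ^ n • ∑ k ∈ range n, x k :=
      posPart_eq_self.2 (smul_nonneg (by positivity) (sum_nonneg fun k _ => hx0 k))
    have h := T.norm_map_posPart_le (x n - (4 : ℝ) ^ n • ∑ k ∈ range n, x k) ((2⁻¹ : ℝ) ^ n • u)
    rw [norm_smul, norm_pow, norm_inv, Real.norm_two] at h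
    have hxn := (hx n).2.2
    rw [hS] at hxn
    exact hxn.trans_le h
  have hupper : Tendsto (fun n => ‖T (y n)‖ + ‖T‖ * ((2⁻¹ : ℝ) ^ n * ‖u‖)) atTop (𝓝 0) := by
    have hgeom : Tendsto (fun n => (2⁻¹ : ℝ) ^ n) atTop (𝓝 0) :=
      tendsto_pow_atTop_nhds_zero_of_lt_one (by norm_num) (by norm_num)
    simpa using (hT y hy_disj ⟨1, hy_norm⟩).add ((hgeom.mul_const ‖u‖).const_mul ‖T‖)
  obtain ⟨n, hn⟩ := (hupper.eventually_lt_const hε).exists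
  exact (hlower n).not_gt hn

end MWeaklyCompact

section Dual

variable {E : Type*} [NormedAddCommGroup E] [Lattice E] [NormedSpace ℝ E]

/-- `|g|(x)`, the modulus of the functional `g` evaluated at `x ≥ 0` by the Riesz–Kantorovich
formula. -/
noncomputable def dualAbs (g : E →L[ℝ] ℝ) (x : E) : ℝ :=
  sSup {r : ℝ | ∃ w : E, |w| ≤ x ∧ r = g w}

variable [HasSolidNorm E]

theorem abs_apply_le_dualAbs (g : E →L[ℝ] ℝ) {w x : E} (hw : |w| ≤ x) : |g w| ≤ dualAbs g x := by
  have hbdd : BddAbove {r : ℝ | ∃ w : E, |w| ≤ x ∧ r = g w} := by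
    refine ⟨‖g‖ * ‖x‖, ?_⟩
    rintro _ ⟨w, hw, rfl⟩
    calc g w ≤ ‖g‖ * ‖w‖ := (le_abs_self _).trans (g.le_opNorm w)
      _ ≤ ‖g‖ * ‖x‖ := by
        gcongr
        exact norm_le_norm_of_abs_le_abs (hw.trans (le_abs_self x))
  have hle : ∀ w, |w| ≤ x → g w ≤ dualAbs g x := fun w hw => le_csSup hbdd ⟨w, hw, rfl⟩
  have hneg := hle (-w) (by rwa [abs_neg])
  rw [map_neg] at hneg
  exact abs_le.2 ⟨by linarith, hle w hw⟩

variable [IsOrderedAddMonoid E]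

theorem norm_le_two_mul_dualAbs_add (g : E →L[ℝ] ℝ) {u : E} (hu : 0 ≤ u) {δ : ℝ}
    (hδ : ∀ v, 0 ≤ v → ‖v‖ ≤ 1 → |g (v - u)⁺| ≤ δ) : ‖g‖ ≤ 2 * (dualAbs g u + δ) := by
  have hpos : ∀ v, 0 ≤ v → ‖v‖ ≤ 1 → |g v| ≤ dualAbs g u + δ := by
    intro v hv hv1
    have hsplit : v ⊓ u + (v - u)⁺ = v := by rw [inf_eq_sub_posPart_sub, sub_add_cancel]
    have hvu : |v ⊓ u| ≤ u := by
      rw [abs_of_nonneg (le_inf hv hu)]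
      exact inf_le_right
    calc |g v| = |g (v ⊓ u) + g (v - u)⁺| := by rw [← map_add, hsplit]
      _ ≤ |g (v ⊓ u)| + |g (v - u)⁺| := abs_add_le _ _
      _ ≤ dualAbs g u + δ := add_le_add (abs_apply_le_dualAbs g hvu) (hδ v hv hv1)
  have h0 : 0 ≤ dualAbs g u + δ := (abs_nonneg _).trans (hpos 0 le_rfl (by simp))
  refine g.opNorm_le_of_unit_norm (by positivity) fun z hz => ?_
  have hzp := hpos z⁺ (posPart_nonneg z) (hz ▸ norm_posPart_le z)
  have hzn := hpos z⁻ (negPart_nonneg z) (hz ▸ norm_negPart_le z)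
  calc ‖g z‖ = |g z⁺ - g z⁻| := by rw [← map_sub, posPart_sub_negPart, Real.norm_eq_abs]
    _ ≤ |g z⁺| + |g z⁻| := abs_sub _ _
    _ ≤ 2 * (dualAbs g u + δ) := by linarith

end Dual

theorem MW_implies_limited_of_seq_wstar_continuous_lattice_ops_general
    {E F : Type*} [NormedAddCommGroup E] [Lattice E] [HasSolidNorm E]
    [IsOrderedAddMonoid E] [NormedSpace ℝ E] [CompleteSpace E]
    [NormedAddCommGroup F]
    [NormedSpace ℝ F] [CompleteSpace F]
    -- the lattice operations in E′ are sequentially w*-continuous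
    (hE' : ∀ g : ℕ → E →L[ℝ] ℝ,
      (∀ x : E, Tendsto (fun n => g n x) atTop (𝓝 0)) →
      ∀ x : E, 0 ≤ x →
        Tendsto (fun n => sSup {r : ℝ | ∃ w : E, |w| ≤ x ∧ r = g n w}) atTop (𝓝 0))
    (T : E →L[ℝ] F)
    -- T is M-weakly compact
    (hMW : ∀ x : ℕ → E, (∀ n m, n ≠ m → |x n| ⊓ |x m| = 0) →
      (∃ C : ℝ, ∀ n, ‖x n‖ ≤ C) →
      Tendsto (fun n => ‖T (x n)‖) atTop (𝓝 0)) :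
    ∀ f : ℕ → F →L[ℝ] ℝ,
      (∀ y : F, Tendsto (fun n => f n y) atTop (𝓝 0)) →
      Tendsto (fun n => ‖(f n).comp T‖) atTop (𝓝 0) := by
  intro f hf
  obtain ⟨M, hM⟩ : ∃ M, ∀ n, ‖f n‖ ≤ M := banach_steinhaus fun y => by
    obtain ⟨C, hC⟩ := (hf y).norm.bddAbove_range
    exact ⟨C, fun n => hC ⟨n, rfl⟩⟩
  have hM0 : 0 ≤ M := (norm_nonneg _).trans (hM 0)
  refine NormedAddGroup.tendsto_nhds_zero.2 fun ε hε => ?_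
  set δ := ε / (4 * (M + 1))
  have hMδ : M * δ < ε / 4 := by
    rw [mul_div_assoc', div_lt_div_iff₀ (by positivity) (by positivity)]
    nlinarith
  obtain ⟨u, hu0, hu⟩ := IsMWeaklyCompact.exists_norm_map_posPart_sub_le hMW
    (show 0 < δ by positivity)
  have hs : Tendsto (fun n => dualAbs ((f n).comp T) u) atTop (𝓝 0) :=
    hE' _ (fun x => hf (T x)) u hu0
  filter_upwards [hs.eventually_lt_const (show (0 : ℝ) < ε / 4 by positivity)] with n hn
  have htail : ∀ v, 0 ≤ v → ‖v‖ ≤ 1 → |(f n).comp T (v - u)⁺| ≤ M * δ := fun v hv hv1 =>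
    ((f n).le_opNorm _).trans (mul_le_mul (hM n) (hu v hv hv1) (norm_nonneg _) hM0)
  rw [norm_norm]
  calc ‖(f n).comp T‖ ≤ 2 * (dualAbs ((f n).comp T) u + M * δ) :=
        norm_le_two_mul_dualAbs_add _ hu0 htail
    _ < ε := by linarith

/-- If the lattice operations in `E′` are sequentially
w*-continuous, then every M-weakly compact operator `T : E → F` between Banach
lattices is limited: `‖T′ f_n‖ → 0` for every w*-null sequence `(f_n)` in `F′`. -/
theorem MW_implies_limited_of_seq_wstar_continuous_lattice_ops
    {E F : Type*} [NormedAddCommGroup E] [Lattice E] [HasSolidNorm E]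
    [IsOrderedAddMonoid E] [NormedSpace ℝ E] [CompleteSpace E]
    [NormedAddCommGroup F] [Lattice F] [HasSolidNorm F]
    [IsOrderedAddMonoid F] [NormedSpace ℝ F] [CompleteSpace F]
    -- the lattice operations in E′ are sequentially w*-continuous
    (hE' : ∀ g : ℕ → E →L[ℝ] ℝ,
      (∀ x : E, Tendsto (fun n => g n x) atTop (𝓝 0)) →
      ∀ x : E, 0 ≤ x →
        Tendsto (fun n => sSup {r : ℝ | ∃ w : E, |w| ≤ x ∧ r = g n w}) atTop (𝓝 0))
    (T : E →L[ℝ] F)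
    -- T is M-weakly compact
    (hMW : ∀ x : ℕ → E, (∀ n m, n ≠ m → |x n| ⊓ |x m| = 0) →
      (∃ C : ℝ, ∀ n, ‖x n‖ ≤ C) →
      Tendsto (fun n => ‖T (x n)‖) atTop (𝓝 0)) :
    ∀ f : ℕ → F →L[ℝ] ℝ,
      (∀ y : F, Tendsto (fun n => f n y) atTop (𝓝 0)) →
      Tendsto (fun n => ‖(f n).comp T‖) atTop (𝓝 0) :=
  MW_implies_limited_of_seq_wstar_continuous_lattice_ops_general hE' T hMW
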